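/- arXiv:2406.11751 — 2 statements merged into one kernel-verified Lean document; each statement's English description precedes it below -/
import Mathlib

section
/- Under the perturbed basic Cholesky-QR model, if κ(A)²γ₂ < 1 where γ₂ ≡ 2ε_A + ε_A² + (1+ε_A)²(ε₁ + (1+ε₁)ε₂), then the matrix Ĝ + E₂ is symmetric positive definite. -/
open Matrix

/-- Spectral (two-)norm of a real matrix. -/
noncomputable def spec {m n : ℕ} (M : Matrix (Fin m) (Fin n) ℝ) : ℝ :=
  ‖LinearMap.toContinuousLinearMap (Matrix.toEuclideanLin M)‖

/-- Singular values of a real `m × n` matrix, in decreasing order: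
`singularValues M i` is `σ_{i+1}(M)` (0-based). -/
noncomputable def singularValues {m n : ℕ} (M : Matrix (Fin m) (Fin n) ℝ) : Fin n → ℝ :=
  fun i =>
    Real.sqrt (((Matrix.isHermitian_conjTranspose_mul_self M).eigenvalues ∘
      ⇑(Tuple.sort (Matrix.isHermitian_conjTranspose_mul_self M).eigenvalues)) i.rev)

/-- Two-norm condition number `κ(M) = σ₁(M)/σₙ(M)`. -/
noncomputable def kappa {m n : ℕ} (M : Matrix (Fin m) (Fin n) ℝ) : ℝ :=
  if h : 0 < n then
    singularValues M ⟨0, h⟩ / singularValues M ⟨n - 1, Nat.sub_lt h Nat.one_pos⟩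
  else 1

/-- Smallest singular value `σₙ(M)`. -/
noncomputable def sigmaMin {m n : ℕ} (M : Matrix (Fin m) (Fin n) ℝ) : ℝ :=
  if h : 0 < n then singularValues M ⟨n - 1, Nat.sub_lt h Nat.one_pos⟩ else 1

/-- Eigenvalues of a real symmetric matrix in decreasing order:
`symmEigs M j` is `λ_{j+1}(M)` (0-based). -/
noncomputable def symmEigs {n : ℕ} (M : Matrix (Fin n) (Fin n) ℝ) : Fin n → ℝ :=
  fun j =>
    if h : M.IsHermitian then (h.eigenvalues ∘ ⇑(Tuple.sort h.eigenvalues)) j.rev else 0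

/-! The perturbation `Δ = Ĝ + E₂ - AᵀA` of the exact Gram matrix expands as
`AᵀE + EᵀA + EᵀE + E₁ + E₂`, and bounding the five terms by the relative errors gives
`‖Δ‖₂ ≤ γ₂ ‖A‖₂²`; this is where `γ₂` comes from. Since `xᵀAᵀAx ≥ σₙ(A)² ‖x‖²` and
`|xᵀΔx| ≤ ‖Δ‖₂ ‖x‖²`, the matrix `Ĝ + E₂ = AᵀA + Δ` is positive definite as soon as
`γ₂ σ₁(A)² < σₙ(A)²`, which is `κ(A)² γ₂ < 1`.
The relative errors are quotients, so the cases `A + E = 0` and `Ĝ = 0` (where Lean's `x / 0 = 0`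
makes `ε₁` or `ε₂` meaningless) are excluded separately: they force `ε_A = 1` or `ε₁ = 1`, hence
`γ₂ ≥ 1`, contradicting `κ(A) ≥ 1`. -/

open scoped Matrix.Norms.L2Operator

theorem spec_eq_l2_opNorm {m n : ℕ} (M : Matrix (Fin m) (Fin n) ℝ) : spec M = ‖M‖ := rfl

namespace Matrix

theorem mulVec_injective_of_rank_eq {K m n : Type*} [Field K] [Fintype m] [Fintype n]
    {M : Matrix m n K} (hM : M.rank = Fintype.card n) : Function.Injective M.mulVec := by
  have h := LinearMap.finrank_range_add_finrank_ker M.mulVecLin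
  rw [← Matrix.rank, hM, Module.finrank_fintype_fun_eq_card] at h
  rw [← M.coe_mulVecLin, ← LinearMap.ker_eq_bot, ← Submodule.finrank_eq_zero]
  omega

variable {ι : Type*} [Fintype ι]

theorem norm_toLp_sq (x : ι → ℝ) : ‖WithLp.toLp 2 x‖ ^ 2 = x ⬝ᵥ x := by
  rw [← real_inner_self_eq_norm_sq, EuclideanSpace.inner_toLp_toLp, star_trivial]

theorem dotProduct_conjTranspose_mul_self_mulVec {κ : Type*} [Fintype κ] (M : Matrix κ ι ℝ)
    (x : ι → ℝ) : x ⬝ᵥ (Mᴴ * M) *ᵥ x = M *ᵥ x ⬝ᵥ M *ᵥ x := by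
  rw [← mulVec_mulVec, dotProduct_mulVec, conjTranspose_eq_transpose_of_trivial, vecMul_transpose]

theorem abs_dotProduct_mulVec_le [DecidableEq ι] (M : Matrix ι ι ℝ) (x : ι → ℝ) :
    |x ⬝ᵥ M *ᵥ x| ≤ ‖M‖ * (x ⬝ᵥ x) := by
  calc |x ⬝ᵥ M *ᵥ x| = |inner ℝ (WithLp.toLp 2 x) (WithLp.toLp 2 (M *ᵥ x))| := by
        rw [EuclideanSpace.inner_toLp_toLp, dotProduct_comm]; simp
    _ ≤ ‖WithLp.toLp 2 x‖ * ‖WithLp.toLp 2 (M *ᵥ x)‖ := abs_real_inner_le_norm _ _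
    _ ≤ ‖WithLp.toLp 2 x‖ * (‖M‖ * ‖WithLp.toLp 2 x‖) := by
        gcongr; exact l2_opNorm_mulVec M (WithLp.toLp 2 x)
    _ = ‖M‖ * (x ⬝ᵥ x) := by rw [← norm_toLp_sq]; ring

theorem dotProduct_self_eq_sum_sq (b : OrthonormalBasis ι ℝ (EuclideanSpace ℝ ι)) (x : ι → ℝ) :
    x ⬝ᵥ x = ∑ i, (⇑(b i) ⬝ᵥ x) ^ 2 := by
  have := b.sum_inner_mul_inner (WithLp.toLp 2 x) (WithLp.toLp 2 x)
  simp only [EuclideanSpace.inner_eq_star_dotProduct] at this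
  simpa [sq, dotProduct_comm] using this.symm

variable [DecidableEq ι] {N : Matrix ι ι ℝ}

theorem IsHermitian.dotProduct_mulVec_eq_sum (hN : N.IsHermitian) (x : ι → ℝ) :
    x ⬝ᵥ N *ᵥ x = ∑ i, hN.eigenvalues i * (⇑(hN.eigenvectorBasis i) ⬝ᵥ x) ^ 2 := by
  have := hN.eigenvectorBasis.sum_inner_mul_inner (WithLp.toLp 2 x) (WithLp.toLp 2 (N *ᵥ x))
  have hNT : Nᵀ = N := by simpa only [conjTranspose_eq_transpose_of_trivial] using hN.eq
  have hb i : ⇑(hN.eigenvectorBasis i) ⬝ᵥ N *ᵥ x =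
      hN.eigenvalues i * (⇑(hN.eigenvectorBasis i) ⬝ᵥ x) := by
    rw [dotProduct_mulVec, ← mulVec_transpose, hNT, hN.mulVec_eigenvectorBasis,
      smul_dotProduct, smul_eq_mul]
  simp only [EuclideanSpace.inner_eq_star_dotProduct, star_trivial] at this
  rw [dotProduct_comm, ← this]
  refine Finset.sum_congr rfl fun i _ => ?_
  rw [dotProduct_comm (N *ᵥ x), hb]
  ring

theorem IsHermitian.mul_dotProduct_self_le (hN : N.IsHermitian) {c : ℝ}
    (hc : ∀ i, c ≤ hN.eigenvalues i) (x : ι → ℝ) : c * (x ⬝ᵥ x) ≤ x ⬝ᵥ N *ᵥ x := by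
  rw [hN.dotProduct_mulVec_eq_sum, dotProduct_self_eq_sum_sq hN.eigenvectorBasis, Finset.mul_sum]
  gcongr with i
  exact hc i

theorem IsHermitian.dotProduct_mulVec_le (hN : N.IsHermitian) {c : ℝ}
    (hc : ∀ i, hN.eigenvalues i ≤ c) (x : ι → ℝ) : x ⬝ᵥ N *ᵥ x ≤ c * (x ⬝ᵥ x) := by
  rw [hN.dotProduct_mulVec_eq_sum, dotProduct_self_eq_sum_sq hN.eigenvectorBasis, Finset.mul_sum]
  gcongr with i
  exact hc i

end Matrix

theorem Tuple.comp_sort_le_of_le {α : Type*} [LinearOrder α] {n : ℕ} (f : Fin n → α)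
    {j i : Fin n} (h : j ≤ (Tuple.sort f).symm i) : (f ∘ Tuple.sort f) j ≤ f i := by
  simpa using Tuple.monotone_sort f h

theorem Tuple.le_comp_sort_of_le {α : Type*} [LinearOrder α] {n : ℕ} (f : Fin n → α)
    {j i : Fin n} (h : (Tuple.sort f).symm i ≤ j) : f i ≤ (f ∘ Tuple.sort f) j := by
  simpa using Tuple.monotone_sort f h

section SingularValues

variable {m n : ℕ} (M : Matrix (Fin m) (Fin n) ℝ)

theorem singularValues_nonneg (j : Fin n) : 0 ≤ singularValues M j := Real.sqrt_nonneg _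

theorem sq_singularValues (j : Fin n) :
    singularValues M j ^ 2 = ((isHermitian_conjTranspose_mul_self M).eigenvalues ∘
      Tuple.sort (isHermitian_conjTranspose_mul_self M).eigenvalues) j.rev :=
  Real.sq_sqrt (eigenvalues_conjTranspose_mul_self_nonneg M _)

theorem sigmaMin_sq_le_eigenvalues (i : Fin n) :
    sigmaMin M ^ 2 ≤ (isHermitian_conjTranspose_mul_self M).eigenvalues i := by
  have hn : 0 < n := i.pos
  rw [sigmaMin, dif_pos hn, sq_singularValues]
  exact Tuple.comp_sort_le_of_le _ (by simp [Fin.le_def, Fin.val_rev]; omega)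

theorem eigenvalues_le_sq_singularValues_zero (hn : 0 < n) (i : Fin n) :
    (isHermitian_conjTranspose_mul_self M).eigenvalues i ≤ singularValues M ⟨0, hn⟩ ^ 2 := by
  rw [sq_singularValues]
  exact Tuple.le_comp_sort_of_le _ (by simp [Fin.le_def, Fin.val_rev]; omega)

theorem kappa_eq_div (hn : 0 < n) : kappa M = singularValues M ⟨0, hn⟩ / sigmaMin M := by
  simp [kappa, sigmaMin, hn]

theorem sigmaMin_le_singularValues_zero (hn : 0 < n) : sigmaMin M ≤ singularValues M ⟨0, hn⟩ := by
  have hs : 0 ≤ sigmaMin M := by rw [sigmaMin, dif_pos hn]; exact singularValues_nonneg M _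
  exact (pow_le_pow_iff_left₀ hs (singularValues_nonneg M _) two_ne_zero).mp <|
    (sigmaMin_sq_le_eigenvalues M ⟨0, hn⟩).trans (eigenvalues_le_sq_singularValues_zero M hn _)

theorem l2_opNorm_le_singularValues_zero (hn : 0 < n) : ‖M‖ ≤ singularValues M ⟨0, hn⟩ := by
  refine ContinuousLinearMap.opNorm_le_bound _ (singularValues_nonneg M _) fun x => ?_
  refine (sq_le_sq₀ (norm_nonneg _) (mul_nonneg (singularValues_nonneg M _) (norm_nonneg x))).mp ?_
  calc ‖WithLp.toLp 2 (M *ᵥ x.ofLp)‖ ^ 2 = x.ofLp ⬝ᵥ (Mᴴ * M) *ᵥ x.ofLp := by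
        rw [norm_toLp_sq, dotProduct_conjTranspose_mul_self_mulVec]
    _ ≤ singularValues M ⟨0, hn⟩ ^ 2 * (x.ofLp ⬝ᵥ x.ofLp) :=
        (isHermitian_conjTranspose_mul_self M).dotProduct_mulVec_le
          (eigenvalues_le_sq_singularValues_zero M hn) _
    _ = (singularValues M ⟨0, hn⟩ * ‖x‖) ^ 2 := by rw [mul_pow, ← norm_toLp_sq]

theorem sigmaMin_pos {M : Matrix (Fin m) (Fin n) ℝ} (hM : M.rank = n) : 0 < sigmaMin M := by
  unfold sigmaMin
  split_ifs with hn
  · exact Real.sqrt_pos.mpr ((PosDef.conjTranspose_mul_self M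
      (mulVec_injective_of_rank_eq (hM.trans (Fintype.card_fin n).symm))).eigenvalues_pos _)
  · exact one_pos

theorem one_le_kappa {M : Matrix (Fin m) (Fin n) ℝ} (hM : M.rank = n) : 1 ≤ kappa M := by
  obtain hn | hn := n.eq_zero_or_pos
  · simp [kappa, hn]
  rw [kappa_eq_div M hn, one_le_div (sigmaMin_pos hM)]
  exact sigmaMin_le_singularValues_zero M hn

end SingularValues

theorem posDef_of_l2_opNorm_sub_lt {m n : ℕ} {M : Matrix (Fin m) (Fin n) ℝ}
    {N : Matrix (Fin n) (Fin n) ℝ} (hN : N.IsHermitian) (h : ‖N - Mᴴ * M‖ < sigmaMin M ^ 2) :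
    N.PosDef := by
  refine posDef_iff_dotProduct_mulVec.mpr ⟨hN, fun x hx => ?_⟩
  have hx : 0 < x ⬝ᵥ x := by simpa using dotProduct_star_self_pos_iff.mpr hx
  have hMM := (isHermitian_conjTranspose_mul_self M).mul_dotProduct_self_le
    (sigmaMin_sq_le_eigenvalues M) x
  have hΔ := neg_le_of_abs_le (abs_dotProduct_mulVec_le (N - Mᴴ * M) x)
  rw [sub_mulVec, dotProduct_sub] at hΔ
  rw [star_trivial]
  nlinarith

theorem lt_one_of_kappa_sq_mul_lt_one {m n : ℕ} {M : Matrix (Fin m) (Fin n) ℝ}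
    (hM : M.rank = n) {γ : ℝ} (hγ : 0 ≤ γ) (h : kappa M ^ 2 * γ < 1) : γ < 1 :=
  (le_mul_of_one_le_left hγ (one_le_pow₀ (one_le_kappa hM))).trans_lt h

theorem mul_sq_l2_opNorm_lt_sigmaMin_sq {m n : ℕ} {M : Matrix (Fin m) (Fin n) ℝ}
    (hM : M.rank = n) (hn : 0 < n) {γ : ℝ} (hγ : 0 ≤ γ) (h : kappa M ^ 2 * γ < 1) :
    γ * ‖M‖ ^ 2 < sigmaMin M ^ 2 := by
  rw [kappa_eq_div M hn, div_pow, div_mul_eq_mul_div, div_lt_one (pow_pos (sigmaMin_pos hM) 2)]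
    at h
  calc γ * ‖M‖ ^ 2 ≤ γ * singularValues M ⟨0, hn⟩ ^ 2 := by
        gcongr; exact l2_opNorm_le_singularValues_zero M hn
    _ < sigmaMin M ^ 2 := by rwa [mul_comm]

section Perturbation

variable {m n : Type*} [Fintype m] [Fintype n] [DecidableEq n]

theorem l2_opNorm_transpose_mul_self (B : Matrix m n ℝ) : ‖Bᵀ * B‖ = ‖B‖ ^ 2 := by
  rw [← conjTranspose_eq_transpose_of_trivial, l2_opNorm_conjTranspose_mul_self, sq]

theorem l2_opNorm_transpose_mul_le [DecidableEq m] (A : Matrix m n ℝ) (E : Matrix m n ℝ) :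
    ‖Aᵀ * E‖ ≤ ‖A‖ * ‖E‖ := by
  simpa only [← conjTranspose_eq_transpose_of_trivial, l2_opNorm_conjTranspose] using
    l2_opNorm_mul Aᵀ E

theorem l2_opNorm_cholQR_gram_sub_le [DecidableEq m] {A E : Matrix m n ℝ} {E₁ E₂ : Matrix n n ℝ}
    {εA ε₁ ε₂ : ℝ} (hεA : ‖E‖ = εA * ‖A‖) (hε₁ : ‖E₁‖ = ε₁ * ‖A + E‖ ^ 2)
    (hε₂ : ‖E₂‖ = ε₂ * ‖(A + E)ᵀ * (A + E) + E₁‖) (hε₁₀ : 0 ≤ ε₁) (hε₂₀ : 0 ≤ ε₂) :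
    ‖(A + E)ᵀ * (A + E) + E₁ + E₂ - Aᵀ * A‖ ≤
      (2 * εA + εA ^ 2 + (1 + εA) ^ 2 * (ε₁ + (1 + ε₁) * ε₂)) * ‖A‖ ^ 2 := by
  have hB : ‖A + E‖ ^ 2 ≤ (1 + εA) ^ 2 * ‖A‖ ^ 2 := by
    rw [← mul_pow]
    gcongr
    exact (norm_add_le A E).trans_eq (by rw [hεA]; ring)
  have hG : ‖(A + E)ᵀ * (A + E) + E₁‖ ≤ (1 + ε₁) * ‖A + E‖ ^ 2 :=
    (norm_add_le _ _).trans_eq (by rw [l2_opNorm_transpose_mul_self, hε₁]; ring)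
  have hexpand :
      (A + E)ᵀ * (A + E) + E₁ + E₂ - Aᵀ * A = Aᵀ * E + Eᵀ * A + Eᵀ * E + (E₁ + E₂) := by
    rw [transpose_add, Matrix.add_mul, Matrix.mul_add, Matrix.mul_add]; abel
  calc ‖(A + E)ᵀ * (A + E) + E₁ + E₂ - Aᵀ * A‖
      ≤ ‖Aᵀ * E‖ + ‖Eᵀ * A‖ + ‖Eᵀ * E‖ + (‖E₁‖ + ‖E₂‖) := by
        rw [hexpand]
        exact (norm_add_le _ _).trans (add_le_add norm_add₃_le (norm_add_le _ _))
    _ ≤ ‖A‖ * ‖E‖ + ‖E‖ * ‖A‖ + ‖E‖ ^ 2 + (ε₁ * ‖A + E‖ ^ 2 + ε₂ * ((1 + ε₁) * ‖A + E‖ ^ 2)) := by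
        rw [l2_opNorm_transpose_mul_self, hε₁, hε₂]
        gcongr
        · exact l2_opNorm_transpose_mul_le A E
        · exact l2_opNorm_transpose_mul_le E A
    _ = (2 * εA + εA ^ 2) * ‖A‖ ^ 2 + (ε₁ + (1 + ε₁) * ε₂) * ‖A + E‖ ^ 2 := by rw [hεA]; ring
    _ ≤ (2 * εA + εA ^ 2) * ‖A‖ ^ 2 + (ε₁ + (1 + ε₁) * ε₂) * ((1 + εA) ^ 2 * ‖A‖ ^ 2) := by
        have : 0 ≤ ε₁ + (1 + ε₁) * ε₂ := add_nonneg hε₁₀ (mul_nonneg (by linarith) hε₂₀)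
        gcongr
    _ = (2 * εA + εA ^ 2 + (1 + εA) ^ 2 * (ε₁ + (1 + ε₁) * ε₂)) * ‖A‖ ^ 2 := by ring

end Perturbation

/-- Theorem 2.2, positive definiteness: under the perturbed basic
Cholesky-QR model, if `κ(A)² γ₂ < 1` then `Ĝ + E₂` is symmetric positive definite. -/
theorem stmt_2 {m n : ℕ} (A E : Matrix (Fin m) (Fin n) ℝ)
    (E₁ E₂ Ghat : Matrix (Fin n) (Fin n) ℝ)
    (hA : A.rank = n) (hE₁ : E₁ᵀ = E₁) (hE₂ : E₂ᵀ = E₂)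
    (hG : Ghat = (A + E)ᵀ * (A + E) + E₁)
    (εA ε₁ ε₂ γ₂ : ℝ)
    (hεA : εA = spec E / spec A)
    (hε₁ : ε₁ = spec E₁ / spec (A + E) ^ 2)
    (hε₂ : ε₂ = spec E₂ / spec Ghat)
    (hγ₂ : γ₂ = 2 * εA + εA ^ 2 + (1 + εA) ^ 2 * (ε₁ + (1 + ε₁) * ε₂))
    (hsmall : kappa A ^ 2 * γ₂ < 1) :
    (Ghat + E₂).PosDef := by
  simp only [spec_eq_l2_opNorm] at hεA hε₁ hε₂
  subst hG
  have hsymm : ((A + E)ᵀ * (A + E) + E₁ + E₂).IsHermitian := by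
    simp [IsHermitian, conjTranspose_eq_transpose_of_trivial, transpose_add, transpose_mul, hE₁,
      hE₂]
  obtain rfl | hn := n.eq_zero_or_pos
  · exact posDef_iff_dotProduct_mulVec.mpr ⟨hsymm, fun x hx => absurd (Subsingleton.elim x 0) hx⟩
  have ha : 0 < ‖A‖ := norm_pos_iff.mpr fun h => by simp [h] at hA; omega
  have hεA₀ : 0 ≤ εA := hεA ▸ by positivity
  have hε₁₀ : 0 ≤ ε₁ := hε₁ ▸ by positivity
  have hε₂₀ : 0 ≤ ε₂ := hε₂ ▸ by positivity
  have hγ₀ : 0 ≤ γ₂ := hγ₂ ▸ by positivity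
  have hγ₁ : γ₂ < 1 := lt_one_of_kappa_sq_mul_lt_one hA hγ₀ hsmall
  have hb : 0 < ‖A + E‖ := norm_pos_iff.mpr fun h => by
    have : εA = 1 := by rw [hεA, eq_neg_of_add_eq_zero_right h, norm_neg, div_self ha.ne']
    subst this
    nlinarith
  have hg : 0 < ‖(A + E)ᵀ * (A + E) + E₁‖ := norm_pos_iff.mpr fun h => by
    have : ε₁ = 1 := by
      rw [hε₁, eq_neg_of_add_eq_zero_right h, norm_neg, l2_opNorm_transpose_mul_self,
        div_self (pow_pos hb 2).ne']
    subst this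
    nlinarith
  refine posDef_of_l2_opNorm_sub_lt (M := A) hsymm ?_
  rw [conjTranspose_eq_transpose_of_trivial]
  refine (l2_opNorm_cholQR_gram_sub_le (εA := εA) ?_ ?_ ?_ hε₁₀ hε₂₀).trans_lt ?_
  · rw [hεA, div_mul_cancel₀ _ ha.ne']
  · rw [hε₁, div_mul_cancel₀ _ (pow_pos hb 2).ne']
  · rw [hε₂, div_mul_cancel₀ _ hg.ne']
  · exact hγ₂ ▸ mul_sq_l2_opNorm_lt_sigmaMin_sq hA hn hγ₀ hsmall
end

section
/- Let A ∈ ℝ^{m×n} with rank(A) = n and thin QR factorization A = QR (QᵀQ = Iₙ, R ∈ ℝ^{n×n} nonsingular). Let F ∈ ℝ^{m×m} be orthogonal and S ∈ ℝ^{c×m}, and suppose A_s ≡ S F A has rank(A_s) = n with thin QR factorization A_s = Q_s R_s (Q_sᵀQ_s = Iₙ, R_s ∈ ℝ^{n×n} nonsingular). Set A₁ = A R_s⁻¹. Then the singular values satisfy σ_i(S F Q) = 1/σ_{n−i+1}(A₁) for 1 ≤ i ≤ n, and consequently κ(S F Q) = κ(A₁). -/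
open Matrix

/-!
With `B = R Rs⁻¹` we have `A₁ = Q B` and `S F Q = Qs B⁻¹`. Multiplying on the left by a matrix
with orthonormal columns leaves the Gram matrix `Mᵀ M`, hence the singular values, unchanged, so
`σ(A₁) = σ(B)` and `σ(S F Q) = σ(B⁻¹)`. The Gram matrix of `B⁻¹` is `(B Bᵀ)⁻¹`, and `B Bᵀ` has the
same characteristic polynomial as `Bᵀ B`; inverting a positive definite matrix inverts its
eigenvalues and reverses their order.
-/

open Finset Polynomial

theorem Fin.eq_of_antitone_of_map_univ_eq {α : Type*} [LinearOrder α] {n : ℕ}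
    {f g : Fin n → α} (hf : Antitone f) (hg : Antitone g)
    (h : Multiset.map f univ.val = Multiset.map g univ.val) : f = g := by
  rw [Fin.univ_val_map, Fin.univ_val_map] at h
  exact List.ofFn_injective <|
    (Multiset.coe_eq_coe.mp h).eq_of_sortedGE hf.sortedGE_ofFn hg.sortedGE_ofFn

section symmEigs

variable {n : ℕ}

theorem antitone_symmEigs (A : Matrix (Fin n) (Fin n) ℝ) : Antitone (symmEigs A) := by
  intro i j hij
  unfold symmEigs
  split_ifs with hA
  · exact Tuple.monotone_sort _ (Fin.rev_le_rev.mpr hij)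
  · exact le_rfl

theorem map_univ_symmEigs {A : Matrix (Fin n) (Fin n) ℝ} (hA : A.IsHermitian) :
    Multiset.map (symmEigs A) univ.val = Multiset.map hA.eigenvalues univ.val := by
  have : symmEigs A = hA.eigenvalues ∘ Tuple.sort hA.eigenvalues ∘ Fin.revPerm := by
    ext j; simp only [symmEigs, dif_pos hA]; rfl
  rw [this, ← Multiset.map_map, ← Multiset.map_map, Multiset.map_univ_val_equiv,
    Multiset.map_univ_val_equiv]

theorem symmEigs_pos {A : Matrix (Fin n) (Fin n) ℝ} (hA : A.PosDef) (j : Fin n) :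
    0 < symmEigs A j := by
  rw [symmEigs, dif_pos hA.isHermitian]
  exact hA.eigenvalues_pos _

theorem symmEigs_eq_of_charpoly_eq {A B : Matrix (Fin n) (Fin n) ℝ} (hA : A.IsHermitian)
    (hB : B.IsHermitian) (h : A.charpoly = B.charpoly) : symmEigs A = symmEigs B := by
  ext j
  simp only [symmEigs, dif_pos hA, dif_pos hB, (hA.eigenvalues_eq_eigenvalues_iff hB).mpr h]

theorem symmEigs_mul_comm {A B : Matrix (Fin n) (Fin n) ℝ} (hAB : (A * B).IsHermitian)
    (hBA : (B * A).IsHermitian) : symmEigs (A * B) = symmEigs (B * A) :=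
  symmEigs_eq_of_charpoly_eq hAB hBA (charpoly_mul_comm A B)

theorem Matrix.IsHermitian.map_univ_eigenvalues_inv {A : Matrix (Fin n) (Fin n) ℝ}
    (hA : A.IsHermitian) (hA' : IsUnit A) :
    Multiset.map hA.inv.eigenvalues univ.val =
      Multiset.map (fun i ↦ (hA.eigenvalues i)⁻¹) univ.val := by
  have hcfc : cfc (fun x : ℝ ↦ x⁻¹) A = A⁻¹ := by
    rw [cfc_ringInverse_id A hA' hA.isSelfAdjoint, Matrix.nonsing_inv_eq_ringInverse]
  have hcharpoly := hA.charpoly_cfc_eq (fun x ↦ x⁻¹)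
  rw [hcfc] at hcharpoly
  have hroots := hA.inv.roots_charpoly_eq_eigenvalues
  rw [hcharpoly, Polynomial.roots_prod _ _ (prod_ne_zero_iff.mpr fun i _ ↦ X_sub_C_ne_zero _)]
    at hroots
  simpa using hroots.symm

theorem symmEigs_inv {A : Matrix (Fin n) (Fin n) ℝ} (hA : A.PosDef) (j : Fin n) :
    symmEigs A⁻¹ j = (symmEigs A j.rev)⁻¹ := by
  refine congrFun (Fin.eq_of_antitone_of_map_univ_eq (g := fun k ↦ (symmEigs A k.rev)⁻¹)
    (antitone_symmEigs _) ?_ ?_) j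
  · intro i k hik
    exact inv_anti₀ (symmEigs_pos hA _) (antitone_symmEigs A (Fin.rev_le_rev.mpr hik))
  · rw [map_univ_symmEigs hA.isHermitian.inv, hA.isHermitian.map_univ_eigenvalues_inv hA.isUnit,
      show (fun k ↦ (symmEigs A k.rev)⁻¹) = (·⁻¹) ∘ symmEigs A ∘ Fin.revPerm from rfl,
      ← Multiset.map_map, ← Multiset.map_map, Multiset.map_univ_val_equiv,
      map_univ_symmEigs hA.isHermitian, Multiset.map_map]
    rfl

end symmEigs

theorem singularValues_eq_sqrt_symmEigs {m n : ℕ} (M : Matrix (Fin m) (Fin n) ℝ) (i : Fin n) :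
    singularValues M i = √(symmEigs (Mᵀ * M) i) := by
  rw [← conjTranspose_eq_transpose_of_trivial, symmEigs,
    dif_pos (isHermitian_conjTranspose_mul_self M)]
  rfl

theorem kappa_eq_of_singularValues_eq_inv_rev {m p n : ℕ} {M : Matrix (Fin m) (Fin n) ℝ}
    {N : Matrix (Fin p) (Fin n) ℝ} (h : ∀ i, singularValues M i = (singularValues N i.rev)⁻¹) :
    kappa M = kappa N := by
  unfold kappa
  split_ifs with hn
  · rw [h, h, inv_div_inv]
    congr 3
    ext
    simp only [Fin.val_rev]
    omega
  · rfl

theorem singularValues_isometry_mul {m p n : ℕ} {U : Matrix (Fin p) (Fin m) ℝ} (hU : Uᵀ * U = 1)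
    (M : Matrix (Fin m) (Fin n) ℝ) : singularValues (U * M) = singularValues M := by
  ext i
  rw [singularValues_eq_sqrt_symmEigs, singularValues_eq_sqrt_symmEigs, transpose_mul,
    Matrix.mul_assoc, ← Matrix.mul_assoc Uᵀ, hU, Matrix.one_mul]

theorem singularValues_inv {n : ℕ} {B : Matrix (Fin n) (Fin n) ℝ} (hB : IsUnit B) (i : Fin n) :
    singularValues B⁻¹ i = (singularValues B i.rev)⁻¹ := by
  have hBBt : (B * Bᵀ).PosDef := by
    simpa using PosDef.mul_conjTranspose_self B (vecMul_injective_iff_isUnit.mpr hB)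
  rw [singularValues_eq_sqrt_symmEigs, singularValues_eq_sqrt_symmEigs, transpose_nonsing_inv,
    ← Matrix.mul_inv_rev, symmEigs_inv hBBt,
    symmEigs_mul_comm hBBt.isHermitian (isHermitian_conjTranspose_mul_self B), Real.sqrt_inv]

/-- With 0-based indexing, `σ_i(SFQ) = 1/σ_{n−i+1}(A₁)` reads
`singularValues (S*F*Q) i = (singularValues A₁ i.rev)⁻¹`. -/
theorem stmt_18_general {m n c : ℕ} (A Q : Matrix (Fin m) (Fin n) ℝ)
    (R : Matrix (Fin n) (Fin n) ℝ)
    (hQR : A = Q * R)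
    (hQ : Qᵀ * Q = (1 : Matrix (Fin n) (Fin n) ℝ)) (hR : IsUnit R.det)
    (F : Matrix (Fin m) (Fin m) ℝ)
    (S : Matrix (Fin c) (Fin m) ℝ)
    (As : Matrix (Fin c) (Fin n) ℝ) (hAs : As = S * F * A)
    (Qs : Matrix (Fin c) (Fin n) ℝ) (Rs : Matrix (Fin n) (Fin n) ℝ)
    (hQsRs : As = Qs * Rs)
    (hQs : Qsᵀ * Qs = (1 : Matrix (Fin n) (Fin n) ℝ)) (hRs : IsUnit Rs.det)
    (A₁ : Matrix (Fin m) (Fin n) ℝ) (hA₁ : A₁ = A * Rs⁻¹) :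
    (∀ i : Fin n, singularValues (S * F * Q) i = (singularValues A₁ i.rev)⁻¹) ∧
      kappa (S * F * Q) = kappa A₁ := by
  set B := R * Rs⁻¹
  have hB : IsUnit B := by
    rw [isUnit_iff_isUnit_det, det_mul]
    exact hR.mul (isUnit_nonsing_inv_det Rs hRs)
  have hA₁B : A₁ = Q * B := by rw [hA₁, hQR, Matrix.mul_assoc]
  have hSFQ : S * F * Q = Qs * B⁻¹ := by
    rw [Matrix.mul_inv_rev, nonsing_inv_nonsing_inv Rs hRs, ← Matrix.mul_assoc, ← hQsRs, hAs, hQR,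
      ← Matrix.mul_assoc, Matrix.mul_nonsing_inv_cancel_right _ _ hR]
  have hsv (i : Fin n) : singularValues (S * F * Q) i = (singularValues A₁ i.rev)⁻¹ := by
    rw [hSFQ, hA₁B, singularValues_isometry_mul hQs, singularValues_isometry_mul hQ,
      singularValues_inv hB]
  exact ⟨hsv, kappa_eq_of_singularValues_eq_inv_rev hsv⟩

/-- Lemma 4.1: with 0-based indexing, `σ_i(SFQ) = 1/σ_{n−i+1}(A₁)`
reads `singularValues (S*F*Q) i = (singularValues A₁ i.rev)⁻¹`, and `κ(SFQ) = κ(A₁)`. -/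
theorem stmt_18 {m n c : ℕ} (A Q : Matrix (Fin m) (Fin n) ℝ)
    (R : Matrix (Fin n) (Fin n) ℝ)
    (hA : A.rank = n) (hQR : A = Q * R)
    (hQ : Qᵀ * Q = (1 : Matrix (Fin n) (Fin n) ℝ)) (hR : IsUnit R.det)
    (F : Matrix (Fin m) (Fin m) ℝ) (hF : Fᵀ * F = (1 : Matrix (Fin m) (Fin m) ℝ))
    (S : Matrix (Fin c) (Fin m) ℝ)
    (As : Matrix (Fin c) (Fin n) ℝ) (hAs : As = S * F * A)
    (hAsrank : As.rank = n)
    (Qs : Matrix (Fin c) (Fin n) ℝ) (Rs : Matrix (Fin n) (Fin n) ℝ)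
    (hQsRs : As = Qs * Rs)
    (hQs : Qsᵀ * Qs = (1 : Matrix (Fin n) (Fin n) ℝ)) (hRs : IsUnit Rs.det)
    (A₁ : Matrix (Fin m) (Fin n) ℝ) (hA₁ : A₁ = A * Rs⁻¹) :
    (∀ i : Fin n, singularValues (S * F * Q) i = (singularValues A₁ i.rev)⁻¹) ∧
      kappa (S * F * Q) = kappa A₁ :=
  stmt_18_general A Q R hQR hQ hR F S As hAs Qs Rs hQsRs hQs hRs A₁ hA₁
end
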